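/- The mutual information density i(t₁,t₂;F) = ∫ f(y|t₁,t₂)·log(f(y|t₁,t₂)/f(y;F)) dy is a continuous function of (t₁,t₂) on the rectangle [−a₁,a₁] × [−a₂,a₂], for any fixed probability measure F on the rectangle. -/

import Mathlib

/-!
`mixtureDensity`, `outputDensity` and `informationDensity` are the paper's `f(y | t₁, t₂)`,
`f(y; F)` and `i(t₁, t₂; F)`; on `ℝ × ℝ` the norm is the sup norm, so `‖t‖ ≤ a` means
`t ∈ [-a, a]²`.

If `‖t‖ ≤ a` and `F` is concentrated on `‖s‖ ≤ a`, then `|y - tᵢ| ≤ |y| + a`, so both `f(y | t)` and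
`f(y; F)`, being averages of shifted Gaussians, lie between `φ (|y| + a)` and `φ 0`. The logarithm
of their ratio is therefore at most `log (φ 0 / φ (|y| + a)) = (|y| + a)² / 2`, and together with
`f(y | t) ≤ exp (a |y|) φ y` this dominates the integrand, uniformly in `t`, by a multiple of the
integrable function `exp ((a + 1) |y|) φ y`. Dominated convergence gives continuity on every such
ball, hence on the whole plane.
-/

open MeasureTheory Real Set

noncomputable def φ (x : ℝ) : ℝ := (Real.sqrt (2 * π))⁻¹ * Real.exp (-x ^ 2 / 2)

open Metric

lemma φ_pos (x : ℝ) : 0 < φ x := by unfold φ; positivity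

@[fun_prop]
lemma continuous_φ : Continuous φ := by unfold φ; fun_prop

lemma φ_le_φ_of_abs_le {x x' : ℝ} (h : |x| ≤ |x'|) : φ x' ≤ φ x := by
  unfold φ
  gcongr _ * exp ?_
  linarith [sq_le_sq.mpr h]

lemma φ_le_φ_zero (x : ℝ) : φ x ≤ φ 0 := φ_le_φ_of_abs_le (by simp)

lemma φ_sub_le (y t : ℝ) : φ (y - t) ≤ exp (|t| * |y|) * φ y := by
  unfold φ
  rw [mul_left_comm, ← exp_add]
  gcongr
  nlinarith [sq_nonneg t, le_abs_self (t * y), abs_mul t y]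

lemma log_φ_zero_div (x : ℝ) : log (φ 0 / φ x) = x ^ 2 / 2 := by
  unfold φ
  rw [mul_div_mul_left _ _ (by positivity), ← exp_sub, log_exp]
  ring

lemma integrable_exp_mul_abs_mul_φ (c : ℝ) : Integrable fun y => exp (c * |y|) * φ y := by
  refine ((integrable_exp_neg_mul_sq (b := 1 / 4) (by norm_num)).const_mul
    (exp (c ^ 2) * (√(2 * π))⁻¹)).mono' (by fun_prop) (ae_of_all _ fun y => ?_)
  rw [norm_of_nonneg (by positivity [φ_pos y])]
  calc exp (c * |y|) * φ y = (√(2 * π))⁻¹ * exp (c * |y| + -y ^ 2 / 2) := by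
        rw [φ, exp_add]; ring
    _ ≤ (√(2 * π))⁻¹ * exp (c ^ 2 + -(1 / 4) * y ^ 2) := by
        gcongr _ * exp ?_
        nlinarith [sq_nonneg (|y| / 2 - c), sq_abs y]
    _ = _ := by rw [exp_add]; ring

lemma abs_log_div_le_log_div {l u x z : ℝ} (hl : 0 < l) (hx : x ∈ Icc l u) (hz : z ∈ Icc l u) :
    |log (x / z)| ≤ log (u / l) := by
  have hx₀ : 0 < x := hl.trans_le hx.1
  have hz₀ : 0 < z := hl.trans_le hz.1
  rw [log_div hx₀.ne' hz₀.ne', log_div (hl.trans_le (hx.1.trans hx.2)).ne' hl.ne', abs_sub_le_iff]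
  constructor <;> gcongr <;> linarith [hx.1, hx.2, hz.1, hz.2]

noncomputable def mixtureDensity (p₁ p₂ : ℝ) (t : ℝ × ℝ) (y : ℝ) : ℝ :=
  p₁ * φ (y - t.1) + p₂ * φ (y - t.2)

section Mixture

variable {p₁ p₂ a : ℝ} {t : ℝ × ℝ} {y : ℝ}

lemma mixtureDensity_mem_of_convex {S : Set ℝ} (hS : Convex ℝ S)
    (hp₁ : 0 ≤ p₁) (hp₂ : 0 ≤ p₂) (hp : p₁ + p₂ = 1)
    (h₁ : φ (y - t.1) ∈ S) (h₂ : φ (y - t.2) ∈ S) : mixtureDensity p₁ p₂ t y ∈ S :=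
  hS h₁ h₂ hp₁ hp₂ hp

lemma mixtureDensity_pos (hp₁ : 0 ≤ p₁) (hp₂ : 0 ≤ p₂) (hp : p₁ + p₂ = 1) :
    0 < mixtureDensity p₁ p₂ t y :=
  mixtureDensity_mem_of_convex (convex_Ioi 0) hp₁ hp₂ hp (φ_pos _) (φ_pos _)

lemma mixtureDensity_le_φ_zero (hp₁ : 0 ≤ p₁) (hp₂ : 0 ≤ p₂) (hp : p₁ + p₂ = 1) :
    mixtureDensity p₁ p₂ t y ≤ φ 0 :=
  mixtureDensity_mem_of_convex (convex_Iic _) hp₁ hp₂ hp (φ_le_φ_zero _) (φ_le_φ_zero _)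

lemma φ_abs_add_le_mixtureDensity (hp₁ : 0 ≤ p₁) (hp₂ : 0 ≤ p₂) (hp : p₁ + p₂ = 1)
    (ht : ‖t‖ ≤ a) : φ (|y| + a) ≤ mixtureDensity p₁ p₂ t y := by
  have key {s : ℝ} (hs : |s| ≤ a) : φ (|y| + a) ≤ φ (y - s) := by
    refine φ_le_φ_of_abs_le ?_
    rw [abs_of_nonneg ((abs_nonneg y).trans (le_add_of_nonneg_right ((abs_nonneg s).trans hs)))]
    exact (abs_sub _ _).trans (by gcongr)
  exact mixtureDensity_mem_of_convex (convex_Ici _) hp₁ hp₂ hp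
    (key ((norm_fst_le t).trans ht)) (key ((norm_snd_le t).trans ht))

lemma mixtureDensity_le_exp_mul_φ (hp₁ : 0 ≤ p₁) (hp₂ : 0 ≤ p₂) (hp : p₁ + p₂ = 1)
    (ht : ‖t‖ ≤ a) : mixtureDensity p₁ p₂ t y ≤ exp (a * |y|) * φ y := by
  have key {s : ℝ} (hs : |s| ≤ a) : φ (y - s) ≤ exp (a * |y|) * φ y :=
    (φ_sub_le y s).trans (mul_le_mul_of_nonneg_right (by gcongr) (φ_pos y).le)
  exact mixtureDensity_mem_of_convex (convex_Iic _) hp₁ hp₂ hp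
    (key ((norm_fst_le t).trans ht)) (key ((norm_snd_le t).trans ht))

lemma norm_mixtureDensity_le_φ_zero (hp₁ : 0 ≤ p₁) (hp₂ : 0 ≤ p₂) (hp : p₁ + p₂ = 1) :
    ‖mixtureDensity p₁ p₂ t y‖ ≤ φ 0 :=
  (norm_of_nonneg (mixtureDensity_pos hp₁ hp₂ hp).le).trans_le (mixtureDensity_le_φ_zero hp₁ hp₂ hp)

lemma continuous_mixtureDensity : Continuous (mixtureDensity p₁ p₂ t) := by
  unfold mixtureDensity; fun_prop

lemma continuous_mixtureDensity_shift : Continuous (mixtureDensity p₁ p₂ · y) := by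
  unfold mixtureDensity; fun_prop

end Mixture

noncomputable def outputDensity (p₁ p₂ : ℝ) (F : Measure (ℝ × ℝ)) (y : ℝ) : ℝ :=
  ∫ s, mixtureDensity p₁ p₂ s y ∂F

section Output

variable {p₁ p₂ a : ℝ} {F : Measure (ℝ × ℝ)} [IsProbabilityMeasure F] {y : ℝ}

lemma integrable_mixtureDensity_shift (hp₁ : 0 ≤ p₁) (hp₂ : 0 ≤ p₂) (hp : p₁ + p₂ = 1) :
    Integrable (mixtureDensity p₁ p₂ · y) F :=
  .of_bound continuous_mixtureDensity_shift.aestronglyMeasurable (φ 0) <|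
    ae_of_all _ fun _ => norm_mixtureDensity_le_φ_zero hp₁ hp₂ hp

lemma outputDensity_le_φ_zero (hp₁ : 0 ≤ p₁) (hp₂ : 0 ≤ p₂) (hp : p₁ + p₂ = 1) :
    outputDensity p₁ p₂ F y ≤ φ 0 := by
  simpa [outputDensity] using integral_mono (integrable_mixtureDensity_shift (F := F) hp₁ hp₂ hp)
    (integrable_const (φ 0)) fun _ => mixtureDensity_le_φ_zero hp₁ hp₂ hp

lemma φ_abs_add_le_outputDensity (hp₁ : 0 ≤ p₁) (hp₂ : 0 ≤ p₂) (hp : p₁ + p₂ = 1)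
    (hF : ∀ᵐ s ∂F, ‖s‖ ≤ a) : φ (|y| + a) ≤ outputDensity p₁ p₂ F y := by
  simpa [outputDensity] using integral_mono_ae (integrable_const (φ (|y| + a)))
    (integrable_mixtureDensity_shift hp₁ hp₂ hp)
    (hF.mono fun _ hs => φ_abs_add_le_mixtureDensity hp₁ hp₂ hp hs)

lemma continuous_outputDensity (hp₁ : 0 ≤ p₁) (hp₂ : 0 ≤ p₂) (hp : p₁ + p₂ = 1) :
    Continuous (outputDensity p₁ p₂ F) :=
  continuous_of_dominated (μ := F) (fun _ => continuous_mixtureDensity_shift.aestronglyMeasurable)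
    (fun _ => ae_of_all _ fun _ => norm_mixtureDensity_le_φ_zero hp₁ hp₂ hp)
    (integrable_const _) (ae_of_all _ fun _ => continuous_mixtureDensity)

end Output

noncomputable def informationDensity (p₁ p₂ : ℝ) (F : Measure (ℝ × ℝ)) (t : ℝ × ℝ) : ℝ :=
  ∫ y, mixtureDensity p₁ p₂ t y * log (mixtureDensity p₁ p₂ t y / outputDensity p₁ p₂ F y)

section Information

variable {p₁ p₂ a : ℝ} {F : Measure (ℝ × ℝ)} [IsProbabilityMeasure F]

lemma norm_mixtureDensity_mul_log_le (hp₁ : 0 ≤ p₁) (hp₂ : 0 ≤ p₂) (hp : p₁ + p₂ = 1)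
    (hF : ∀ᵐ s ∂F, ‖s‖ ≤ a) {t : ℝ × ℝ} (ht : ‖t‖ ≤ a) (y : ℝ) :
    ‖mixtureDensity p₁ p₂ t y * log (mixtureDensity p₁ p₂ t y / outputDensity p₁ p₂ F y)‖ ≤
      exp a * (exp ((a + 1) * |y|) * φ y) := by
  have hlog : |log (mixtureDensity p₁ p₂ t y / outputDensity p₁ p₂ F y)| ≤ (|y| + a) ^ 2 / 2 := by
    rw [← log_φ_zero_div]
    exact abs_log_div_le_log_div (φ_pos _)
      ⟨φ_abs_add_le_mixtureDensity hp₁ hp₂ hp ht, mixtureDensity_le_φ_zero hp₁ hp₂ hp⟩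
      ⟨φ_abs_add_le_outputDensity hp₁ hp₂ hp hF, outputDensity_le_φ_zero hp₁ hp₂ hp⟩
  have hsq : (|y| + a) ^ 2 / 2 ≤ exp (|y| + a) := by
    simpa using pow_div_factorial_le_exp _ (add_nonneg (abs_nonneg y) ((norm_nonneg t).trans ht)) 2
  calc _ = mixtureDensity p₁ p₂ t y *
        |log (mixtureDensity p₁ p₂ t y / outputDensity p₁ p₂ F y)| := by
        rw [norm_mul, norm_of_nonneg (mixtureDensity_pos hp₁ hp₂ hp).le, norm_eq_abs]
    _ ≤ exp (a * |y|) * φ y * exp (|y| + a) :=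
        mul_le_mul (mixtureDensity_le_exp_mul_φ hp₁ hp₂ hp ht) (hlog.trans hsq) (abs_nonneg _)
          (by positivity [φ_pos y])
    _ = exp a * (exp ((a + 1) * |y|) * φ y) := by
        rw [exp_add, add_mul, one_mul, exp_add]; ring

lemma continuousOn_informationDensity (hp₁ : 0 ≤ p₁) (hp₂ : 0 ≤ p₂) (hp : p₁ + p₂ = 1)
    (hF : ∀ᵐ s ∂F, ‖s‖ ≤ a) : ContinuousOn (informationDensity p₁ p₂ F) (closedBall 0 a) := by
  have hd (y : ℝ) : outputDensity p₁ p₂ F y ≠ 0 :=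
    ((φ_pos _).trans_le (φ_abs_add_le_outputDensity hp₁ hp₂ hp hF)).ne'
  have hm {t : ℝ × ℝ} {y : ℝ} : mixtureDensity p₁ p₂ t y / outputDensity p₁ p₂ F y ≠ 0 :=
    div_ne_zero (mixtureDensity_pos hp₁ hp₂ hp).ne' (hd y)
  refine continuousOn_of_dominated (fun t _ => Continuous.aestronglyMeasurable ?_)
    (fun t ht => ae_of_all _ (norm_mixtureDensity_mul_log_le hp₁ hp₂ hp hF
      (mem_closedBall_zero_iff.mp ht))) ((integrable_exp_mul_abs_mul_φ (a + 1)).const_mul _)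
    (ae_of_all _ fun y => Continuous.continuousOn ?_)
  · exact continuous_mixtureDensity.mul
      ((continuous_mixtureDensity.div (continuous_outputDensity hp₁ hp₂ hp) hd).log fun _ => hm)
  · exact continuous_mixtureDensity_shift.mul
      ((continuous_mixtureDensity_shift.div_const _).log fun _ => hm)

lemma continuous_informationDensity (hp₁ : 0 ≤ p₁) (hp₂ : 0 ≤ p₂) (hp : p₁ + p₂ = 1)
    (hF : ∀ᵐ s ∂F, ‖s‖ ≤ a) : Continuous (informationDensity p₁ p₂ F) := by
  refine continuous_iff_continuousAt.mpr fun t => ?_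
  have ht : t ∈ ball 0 (max a (‖t‖ + 1)) :=
    mem_ball_zero_iff.mpr ((lt_add_one _).trans_le (le_max_right _ _))
  exact (continuousOn_informationDensity hp₁ hp₂ hp (hF.mono fun _ hs => hs.trans
    (le_max_left _ _))).continuousAt (closedBall_mem_nhds_of_mem ht)

end Information

theorem mutual_information_density_continuous_general (a₁ a₂ : ℝ)
    (p₁ p₂ : ℝ) (hp₁ : 0 ≤ p₁) (hp₂ : 0 ≤ p₂) (hp : p₁ + p₂ = 1)
    (F : Measure (ℝ × ℝ)) [IsProbabilityMeasure F]
    (hF : F (Icc (-a₁) a₁ ×ˢ Icc (-a₂) a₂) = 1) :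
    ContinuousOn
      (fun t : ℝ × ℝ => ∫ y : ℝ, (p₁ * φ (y - t.1) + p₂ * φ (y - t.2)) *
        Real.log ((p₁ * φ (y - t.1) + p₂ * φ (y - t.2)) /
          ∫ s, (p₁ * φ (y - s.1) + p₂ * φ (y - s.2)) ∂F))
      (Icc (-a₁) a₁ ×ˢ Icc (-a₂) a₂) := by
  have hF' : ∀ᵐ s ∂F, ‖s‖ ≤ max a₁ a₂ := by
    filter_upwards [(mem_ae_iff_prob_eq_one (measurableSet_Icc.prod measurableSet_Icc)).mpr hF]
      with s ⟨hs₁, hs₂⟩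
    exact max_le_max (abs_le.mpr hs₁) (abs_le.mpr hs₂)
  exact (continuous_informationDensity hp₁ hp₂ hp hF').continuousOn

/-- The mutual information density `i(t₁,t₂;F)` is continuous in `(t₁,t₂)` on the
rectangle `[-a₁,a₁] × [-a₂,a₂]`, for any fixed probability measure `F` on the
rectangle. -/
theorem mutual_information_density_continuous (a₁ a₂ : ℝ) (ha₁ : 0 < a₁) (ha₂ : 0 < a₂)
    (p₁ p₂ : ℝ) (hp₁ : 0 ≤ p₁) (hp₂ : 0 ≤ p₂) (hp : p₁ + p₂ = 1)
    (F : Measure (ℝ × ℝ)) [IsProbabilityMeasure F]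
    (hF : F (Icc (-a₁) a₁ ×ˢ Icc (-a₂) a₂) = 1) :
    ContinuousOn
      (fun t : ℝ × ℝ => ∫ y : ℝ, (p₁ * φ (y - t.1) + p₂ * φ (y - t.2)) *
        Real.log ((p₁ * φ (y - t.1) + p₂ * φ (y - t.2)) /
          ∫ s, (p₁ * φ (y - s.1) + p₂ * φ (y - s.2)) ∂F))
      (Icc (-a₁) a₁ ×ˢ Icc (-a₂) a₂) :=
  mutual_information_density_continuous_general a₁ a₂ p₁ p₂ hp₁ hp₂ hp F hF
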